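/- Let E and F be Banach spaces and for i = 1,2 let T_i : [0,∞) → L(E), R_i : [0,∞) → L(F,E), S_i : [0,∞) → L(F) be families of bounded operators such that each family 𝒯_i(t) := M(T_i(t), R_i(t), S_i(t)) is a semigroup on E × F. Assume there exist constants M' ≥ 1, K > 0 and ω' ∈ ℝ such that for i = 1,2, all t ≥ 0 and all integers n ≥ 1: (0) ‖T_i(t)‖ ≤ M'·e^{ω't} and ‖S_i(t)‖ ≤ M'·e^{ω't}; (i) ‖(1/2^n)·(T₁(t/n)T₂(t/n) + T₂(t/n)T₁(t/n))^n‖ ≤ M'·e^{ω't} and ‖(1/2^n)·(S₁(t/n)S₂(t/n) + S₂(t/n)S₁(t/n))^n‖ ≤ M'·e^{ω't}; (ii) ‖R_i(t)‖ ≤ K·t·e^{ω't}. Then there exist M ≥ 1 and ω ∈ ℝ such that ‖(1/2^n)·(𝒯₁(t/n)𝒯₂(t/n) + 𝒯₂(t/n)𝒯₁(t/n))^n‖ ≤ M·e^{ωt} for all t ≥ 0 and all integers n ≥ 1. -/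

import Mathlib

open ContinuousLinearMap

/-- The upper triangular operator matrix `M(T,R,S)(x,y) = (T x + R y, S y)` on `E × F`. -/
noncomputable def upperTri {E F : Type*} [NormedAddCommGroup E] [NormedSpace ℝ E]
    [NormedAddCommGroup F] [NormedSpace ℝ F]
    (T : E →L[ℝ] E) (R : F →L[ℝ] E) (S : F →L[ℝ] F) : (E × F) →L[ℝ] (E × F) :=
  (T.comp (fst ℝ E F) + R.comp (snd ℝ E F)).prod (S.comp (snd ℝ E F))

/-- A one-parameter semigroup on a Banach space: `U 0 = Id` and
`U (t + s) = U t ∘ U s` for all `s, t ≥ 0`. -/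
def IsOPSemigroup {X : Type*} [NormedAddCommGroup X] [NormedSpace ℝ X]
    (U : ℝ → X →L[ℝ] X) : Prop :=
  U 0 = 1 ∧ ∀ s t : ℝ, 0 ≤ s → 0 ≤ t → U (t + s) = U t * U s

set_option maxHeartbeats 1000000

section lemmas
variable {E F : Type*} [NormedAddCommGroup E] [NormedSpace ℝ E]
    [NormedAddCommGroup F] [NormedSpace ℝ F]

lemma upperTri_apply (T : E →L[ℝ] E) (R : F →L[ℝ] E) (S : F →L[ℝ] F) (p : E × F) :
    upperTri T R S p = (T p.1 + R p.2, S p.2) := rfl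

lemma upperTri_mul (T T' : E →L[ℝ] E) (R R' : F →L[ℝ] E) (S S' : F →L[ℝ] F) :
    upperTri T R S * upperTri T' R' S' =
      upperTri (T * T') (T.comp R' + R.comp S') (S * S') := by
  ext p <;> simp [upperTri_apply, mul_apply, Prod.ext_iff, map_add, add_assoc]

lemma upperTri_add (T T' : E →L[ℝ] E) (R R' : F →L[ℝ] E) (S S' : F →L[ℝ] F) :
    upperTri T R S + upperTri T' R' S' = upperTri (T + T') (R + R') (S + S') := by
  ext p <;> simp [upperTri_apply, Prod.ext_iff]

lemma upperTri_smul (c : ℝ) (T : E →L[ℝ] E) (R : F →L[ℝ] E) (S : F →L[ℝ] F) :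
    c • upperTri T R S = upperTri (c • T) (c • R) (c • S) := by
  ext p <;> simp [upperTri_apply, Prod.ext_iff, smul_add]

lemma upperTri_pow (T : E →L[ℝ] E) (R : F →L[ℝ] E) (S : F →L[ℝ] F) (n : ℕ) :
    (upperTri T R S) ^ n =
      upperTri (T ^ n) (∑ j ∈ Finset.range n, (T ^ j).comp (R.comp (S ^ (n - 1 - j)))) (S ^ n) := by
  induction n with
  | zero =>
    ext p <;> simp [upperTri_apply, Prod.ext_iff]
  | succ n ih =>
    rw [pow_succ, ih, upperTri_mul]
    rw [← pow_succ, ← pow_succ]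
    congr 1
    rw [Finset.sum_range_succ, add_comm]
    congr 1
    · ext y
      simp only [ContinuousLinearMap.coe_sum', Finset.sum_apply, comp_apply, coe_comp']
      refine Finset.sum_congr rfl fun j hj => ?_
      have hje : n + 1 - 1 - j = (n - 1 - j) + 1 := by
        have := Finset.mem_range.mp hj; omega
      rw [hje, pow_succ]
      simp [mul_apply, Function.comp]
    · have h0 : n + 1 - 1 - n = 0 := by omega
      rw [h0, pow_zero]
      ext y; simp

lemma norm_upperTri_le (T : E →L[ℝ] E) (R : F →L[ℝ] E) (S : F →L[ℝ] F) :
    ‖upperTri T R S‖ ≤ ‖T‖ + ‖R‖ + ‖S‖ := by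
  refine opNorm_le_bound _ (by positivity) fun p => ?_
  rw [upperTri_apply, Prod.norm_def]
  have h1 : ‖p.1‖ ≤ ‖p‖ := norm_fst_le p
  have h2 : ‖p.2‖ ≤ ‖p‖ := norm_snd_le p
  have hT := (T.le_opNorm p.1).trans (by nlinarith [norm_nonneg T] : ‖T‖ * ‖p.1‖ ≤ ‖T‖ * ‖p‖)
  have hR := (R.le_opNorm p.2).trans (by nlinarith [norm_nonneg R] : ‖R‖ * ‖p.2‖ ≤ ‖R‖ * ‖p‖)
  have hS := (S.le_opNorm p.2).trans (by nlinarith [norm_nonneg S] : ‖S‖ * ‖p.2‖ ≤ ‖S‖ * ‖p‖)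
  apply max_le
  · calc ‖T p.1 + R p.2‖ ≤ ‖T p.1‖ + ‖R p.2‖ := norm_add_le _ _
      _ ≤ ‖T‖ * ‖p‖ + ‖R‖ * ‖p‖ := add_le_add hT hR
      _ ≤ (‖T‖ + ‖R‖ + ‖S‖) * ‖p‖ := by nlinarith [norm_nonneg S, norm_nonneg p]
  · calc ‖S p.2‖ ≤ ‖S‖ * ‖p‖ := hS
      _ ≤ (‖T‖ + ‖R‖ + ‖S‖) * ‖p‖ := by nlinarith [norm_nonneg T, norm_nonneg R, norm_nonneg p]
end lemmas


/-- stability of the symmetrically weighted products of two upper triangular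
operator matrix semigroups. -/
theorem stability_weighted_upperTri {E F : Type*}
    [NormedAddCommGroup E] [NormedSpace ℝ E] [CompleteSpace E]
    [NormedAddCommGroup F] [NormedSpace ℝ F] [CompleteSpace F]
    (T₁ T₂ : ℝ → E →L[ℝ] E) (R₁ R₂ : ℝ → F →L[ℝ] E) (S₁ S₂ : ℝ → F →L[ℝ] F)
    (hsg₁ : IsOPSemigroup (fun t => upperTri (T₁ t) (R₁ t) (S₁ t)))
    (hsg₂ : IsOPSemigroup (fun t => upperTri (T₂ t) (R₂ t) (S₂ t)))
    (M' K ω' : ℝ) (hM' : 1 ≤ M') (hK : 0 < K)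
    (hT₁ : ∀ t : ℝ, 0 ≤ t → ‖T₁ t‖ ≤ M' * Real.exp (ω' * t))
    (hT₂ : ∀ t : ℝ, 0 ≤ t → ‖T₂ t‖ ≤ M' * Real.exp (ω' * t))
    (hS₁ : ∀ t : ℝ, 0 ≤ t → ‖S₁ t‖ ≤ M' * Real.exp (ω' * t))
    (hS₂ : ∀ t : ℝ, 0 ≤ t → ‖S₂ t‖ ≤ M' * Real.exp (ω' * t))
    (hTprod : ∀ t : ℝ, 0 ≤ t → ∀ n : ℕ, 1 ≤ n →
      ‖(1 / 2 ^ n : ℝ) •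
        (T₁ (t / n) * T₂ (t / n) + T₂ (t / n) * T₁ (t / n)) ^ n‖ ≤ M' * Real.exp (ω' * t))
    (hSprod : ∀ t : ℝ, 0 ≤ t → ∀ n : ℕ, 1 ≤ n →
      ‖(1 / 2 ^ n : ℝ) •
        (S₁ (t / n) * S₂ (t / n) + S₂ (t / n) * S₁ (t / n)) ^ n‖ ≤ M' * Real.exp (ω' * t))
    (hR₁ : ∀ t : ℝ, 0 ≤ t → ‖R₁ t‖ ≤ K * t * Real.exp (ω' * t))
    (hR₂ : ∀ t : ℝ, 0 ≤ t → ‖R₂ t‖ ≤ K * t * Real.exp (ω' * t)) :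
    ∃ M ω : ℝ, 1 ≤ M ∧ ∀ t : ℝ, 0 ≤ t → ∀ n : ℕ, 1 ≤ n →
      ‖(1 / 2 ^ n : ℝ) •
        (upperTri (T₁ (t / n)) (R₁ (t / n)) (S₁ (t / n)) *
            upperTri (T₂ (t / n)) (R₂ (t / n)) (S₂ (t / n)) +
          upperTri (T₂ (t / n)) (R₂ (t / n)) (S₂ (t / n)) *
            upperTri (T₁ (t / n)) (R₁ (t / n)) (S₁ (t / n))) ^ n‖ ≤ M * Real.exp (ω * t) := by
  have hM'pos : (0:ℝ) < M' := lt_of_lt_of_le one_pos hM'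
  have hM0 : (0:ℝ) ≤ M' := hM'pos.le
  refine ⟨2 * M' + 2 * M' ^ 3 * K, 2 * |ω'| + 1, ?_, ?_⟩
  · have h3 : (0:ℝ) < M' ^ 3 * K := mul_pos (pow_pos hM'pos 3) hK
    linarith
  intro t ht n hn
  have hn0 : (0:ℝ) < n := by exact_mod_cast hn
  set u := t / (n:ℝ) with hu_def
  have hu : 0 ≤ u := div_nonneg ht hn0.le
  have hnu : (n:ℝ) * u = t := by
    rw [hu_def, mul_div_assoc']; exact mul_div_cancel_left₀ t (ne_of_gt hn0)
  have hut : u ≤ t := div_le_self ht (by exact_mod_cast hn)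
  set e1 := Real.exp (|ω'| * u) with he1_def
  have he1pos : 0 < e1 := Real.exp_pos _
  have he1 : 1 ≤ e1 := Real.one_le_exp (by positivity)
  have hepos : 0 < Real.exp (ω' * u) := Real.exp_pos _
  have hexp_le : Real.exp (ω' * u) ≤ e1 := by
    rw [he1_def]
    exact Real.exp_le_exp.mpr (by nlinarith [le_abs_self ω'])
  set P := T₁ u * T₂ u + T₂ u * T₁ u with hP
  set W := S₁ u * S₂ u + S₂ u * S₁ u with hW
  set Q := ((T₁ u).comp (R₂ u) + (R₁ u).comp (S₂ u)) +
      ((T₂ u).comp (R₁ u) + (R₂ u).comp (S₁ u)) with hQdef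
  have hmul : upperTri (T₁ u) (R₁ u) (S₁ u) * upperTri (T₂ u) (R₂ u) (S₂ u) +
      upperTri (T₂ u) (R₂ u) (S₂ u) * upperTri (T₁ u) (R₁ u) (S₁ u) = upperTri P Q W := by
    rw [upperTri_mul, upperTri_mul, upperTri_add]
  rw [hmul, upperTri_pow, upperTri_smul]
  refine (norm_upperTri_le _ _ _).trans ?_
  have he2pos : (0:ℝ) ≤ 2 * e1 := by linarith
  -- bounds on powers of P and W
  have hPj : ∀ j : ℕ, 1 ≤ j → ‖P ^ j‖ ≤ M' * (2 * e1) ^ j := by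
    intro j hj
    have hj0 : (0:ℝ) < j := by exact_mod_cast hj
    have hju : (0:ℝ) ≤ (j:ℝ) * u := by positivity
    have h := hTprod ((j:ℝ) * u) hju j hj
    rw [mul_div_cancel_left₀ u (ne_of_gt hj0), ← hP] at h
    rw [norm_smul ((1:ℝ) / 2 ^ j) (P ^ j), Real.norm_eq_abs,
      abs_of_pos (by positivity : (0:ℝ) < 1 / 2 ^ j)] at h
    have hE : Real.exp (ω' * ((j:ℝ) * u)) = Real.exp (ω' * u) ^ j := by
      rw [show ω' * ((j:ℝ) * u) = (j:ℝ) * (ω' * u) by ring, Real.exp_nat_mul]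
    rw [hE] at h
    have hpow : Real.exp (ω' * u) ^ j ≤ e1 ^ j :=
      pow_le_pow_left₀ hepos.le hexp_le j
    have h2j : (0:ℝ) < 2 ^ j := by positivity
    calc ‖P ^ j‖ = 2 ^ j * (1 / 2 ^ j * ‖P ^ j‖) := by field_simp
      _ ≤ 2 ^ j * (M' * Real.exp (ω' * u) ^ j) := mul_le_mul_of_nonneg_left h h2j.le
      _ ≤ 2 ^ j * (M' * e1 ^ j) :=
          mul_le_mul_of_nonneg_left (mul_le_mul_of_nonneg_left hpow hM0) h2j.le
      _ = M' * (2 * e1) ^ j := by rw [mul_pow]; ring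
  have hWj : ∀ j : ℕ, 1 ≤ j → ‖W ^ j‖ ≤ M' * (2 * e1) ^ j := by
    intro j hj
    have hj0 : (0:ℝ) < j := by exact_mod_cast hj
    have hju : (0:ℝ) ≤ (j:ℝ) * u := by positivity
    have h := hSprod ((j:ℝ) * u) hju j hj
    rw [mul_div_cancel_left₀ u (ne_of_gt hj0), ← hW] at h
    rw [norm_smul ((1:ℝ) / 2 ^ j) (W ^ j), Real.norm_eq_abs,
      abs_of_pos (by positivity : (0:ℝ) < 1 / 2 ^ j)] at h
    have hE : Real.exp (ω' * ((j:ℝ) * u)) = Real.exp (ω' * u) ^ j := by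
      rw [show ω' * ((j:ℝ) * u) = (j:ℝ) * (ω' * u) by ring, Real.exp_nat_mul]
    rw [hE] at h
    have hpow : Real.exp (ω' * u) ^ j ≤ e1 ^ j :=
      pow_le_pow_left₀ hepos.le hexp_le j
    have h2j : (0:ℝ) < 2 ^ j := by positivity
    calc ‖W ^ j‖ = 2 ^ j * (1 / 2 ^ j * ‖W ^ j‖) := by field_simp
      _ ≤ 2 ^ j * (M' * Real.exp (ω' * u) ^ j) := mul_le_mul_of_nonneg_left h h2j.le
      _ ≤ 2 ^ j * (M' * e1 ^ j) :=
          mul_le_mul_of_nonneg_left (mul_le_mul_of_nonneg_left hpow hM0) h2j.le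
      _ = M' * (2 * e1) ^ j := by rw [mul_pow]; ring
  have hPj' : ∀ j : ℕ, ‖P ^ j‖ ≤ M' * (2 * e1) ^ j := by
    intro j
    rcases Nat.eq_zero_or_pos j with h0 | h1
    · subst h0
      simp only [pow_zero, mul_one]
      calc ‖(1 : E →L[ℝ] E)‖ ≤ 1 := by rw [ContinuousLinearMap.one_def]; exact norm_id_le
        _ ≤ M' := hM'
    · exact hPj j h1
  have hWj' : ∀ j : ℕ, ‖W ^ j‖ ≤ M' * (2 * e1) ^ j := by
    intro j
    rcases Nat.eq_zero_or_pos j with h0 | h1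
    · subst h0
      simp only [pow_zero, mul_one]
      calc ‖(1 : F →L[ℝ] F)‖ ≤ 1 := by rw [ContinuousLinearMap.one_def]; exact norm_id_le
        _ ≤ M' := hM'
    · exact hWj j h1
  -- bound on Q
  have hKu : (0:ℝ) ≤ M' * K * u := mul_nonneg (mul_nonneg hM0 hK.le) hu
  have hQ : ‖Q‖ ≤ 4 * (M' * K * u) * e1 ^ 2 := by
    have hsq : Real.exp (ω' * u) ^ 2 ≤ e1 ^ 2 := pow_le_pow_left₀ hepos.le hexp_le 2
    have hterm : ∀ (A : E →L[ℝ] E) (B : F →L[ℝ] E),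
        ‖A‖ ≤ M' * Real.exp (ω' * u) → ‖B‖ ≤ K * u * Real.exp (ω' * u) →
        ‖A.comp B‖ ≤ M' * K * u * e1 ^ 2 := by
      intro A B hA hB
      calc ‖A.comp B‖ ≤ ‖A‖ * ‖B‖ := opNorm_comp_le _ _
        _ ≤ (M' * Real.exp (ω' * u)) * (K * u * Real.exp (ω' * u)) :=
            mul_le_mul hA hB (norm_nonneg B) (mul_nonneg hM0 hepos.le)
        _ = (M' * K * u) * Real.exp (ω' * u) ^ 2 := by ring
        _ ≤ (M' * K * u) * e1 ^ 2 := mul_le_mul_of_nonneg_left hsq hKu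
        _ = M' * K * u * e1 ^ 2 := by ring
    have hterm' : ∀ (B : F →L[ℝ] E) (A : F →L[ℝ] F),
        ‖B‖ ≤ K * u * Real.exp (ω' * u) → ‖A‖ ≤ M' * Real.exp (ω' * u) →
        ‖B.comp A‖ ≤ M' * K * u * e1 ^ 2 := by
      intro B A hB hA
      calc ‖B.comp A‖ ≤ ‖B‖ * ‖A‖ := opNorm_comp_le _ _
        _ ≤ (K * u * Real.exp (ω' * u)) * (M' * Real.exp (ω' * u)) :=
            mul_le_mul hB hA (norm_nonneg A)
              (mul_nonneg (mul_nonneg hK.le hu) hepos.le)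
        _ = (M' * K * u) * Real.exp (ω' * u) ^ 2 := by ring
        _ ≤ (M' * K * u) * e1 ^ 2 := mul_le_mul_of_nonneg_left hsq hKu
        _ = M' * K * u * e1 ^ 2 := by ring
    have b1 := hterm (T₁ u) (R₂ u) (hT₁ u hu) (hR₂ u hu)
    have b2 := hterm' (R₁ u) (S₂ u) (hR₁ u hu) (hS₂ u hu)
    have b3 := hterm (T₂ u) (R₁ u) (hT₂ u hu) (hR₁ u hu)
    have b4 := hterm' (R₂ u) (S₁ u) (hR₂ u hu) (hS₁ u hu)
    calc ‖Q‖ ≤ ‖(T₁ u).comp (R₂ u) + (R₁ u).comp (S₂ u)‖ +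
          ‖(T₂ u).comp (R₁ u) + (R₂ u).comp (S₁ u)‖ := norm_add_le _ _
      _ ≤ (‖(T₁ u).comp (R₂ u)‖ + ‖(R₁ u).comp (S₂ u)‖) +
          (‖(T₂ u).comp (R₁ u)‖ + ‖(R₂ u).comp (S₁ u)‖) :=
            add_le_add (norm_add_le _ _) (norm_add_le _ _)
      _ ≤ 4 * (M' * K * u) * e1 ^ 2 := by linarith
  have hQ0 : (0:ℝ) ≤ 4 * (M' * K * u) * e1 ^ 2 := by positivity
  -- bound on the middle sum
  set C := M' * M' * (4 * (M' * K * u) * e1 ^ 2) * (2 * e1) ^ (n - 1) with hC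
  have hsum : ‖∑ j ∈ Finset.range n, (P ^ j).comp (Q.comp (W ^ (n - 1 - j)))‖ ≤ n * C := by
    calc ‖∑ j ∈ Finset.range n, (P ^ j).comp (Q.comp (W ^ (n - 1 - j)))‖
        ≤ ∑ j ∈ Finset.range n, ‖(P ^ j).comp (Q.comp (W ^ (n - 1 - j)))‖ :=
          norm_sum_le _ _
      _ ≤ ∑ j ∈ Finset.range n, C := by
          refine Finset.sum_le_sum fun j hj => ?_
          have hjn := Finset.mem_range.mp hj
          have hexps : (2 * e1) ^ j * (2 * e1) ^ (n - 1 - j) = (2 * e1) ^ (n - 1) := by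
            rw [← pow_add]; congr 1; omega
          have p1 : (0:ℝ) ≤ (2 * e1) ^ j := pow_nonneg he2pos j
          have p2 : (0:ℝ) ≤ (2 * e1) ^ (n - 1 - j) := pow_nonneg he2pos _
          calc ‖(P ^ j).comp (Q.comp (W ^ (n - 1 - j)))‖
              ≤ ‖P ^ j‖ * ‖Q.comp (W ^ (n - 1 - j))‖ := opNorm_comp_le _ _
            _ ≤ ‖P ^ j‖ * (‖Q‖ * ‖W ^ (n - 1 - j)‖) :=
                mul_le_mul_of_nonneg_left (opNorm_comp_le _ _) (norm_nonneg _)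
            _ ≤ (M' * (2 * e1) ^ j) * ((4 * (M' * K * u) * e1 ^ 2) *
                  (M' * (2 * e1) ^ (n - 1 - j))) := by
                refine mul_le_mul (hPj' j) ?_
                  (mul_nonneg (norm_nonneg Q) (norm_nonneg _)) (mul_nonneg hM0 p1)
                exact mul_le_mul hQ (hWj' _) (norm_nonneg _) hQ0
            _ = C := by rw [hC, ← hexps]; ring
      _ = n * C := by rw [Finset.sum_const, Finset.card_range, nsmul_eq_mul]
  -- exponent comparison
  have hexp1 : Real.exp (ω' * t) ≤ Real.exp ((2 * |ω'| + 1) * t) := by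
    apply Real.exp_le_exp.mpr
    nlinarith [le_abs_self ω', abs_nonneg ω']
  -- the three component bounds
  have hPn : ‖(1 / 2 ^ n : ℝ) • P ^ n‖ ≤ M' * Real.exp ((2 * |ω'| + 1) * t) := by
    have h := hTprod t ht n hn
    rw [← hu_def, ← hP] at h
    exact h.trans (mul_le_mul_of_nonneg_left hexp1 hM0)
  have hWn : ‖(1 / 2 ^ n : ℝ) • W ^ n‖ ≤ M' * Real.exp ((2 * |ω'| + 1) * t) := by
    have h := hSprod t ht n hn
    rw [← hu_def, ← hW] at h
    exact h.trans (mul_le_mul_of_nonneg_left hexp1 hM0)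
  have hmid : ‖(1 / 2 ^ n : ℝ) • ∑ j ∈ Finset.range n, (P ^ j).comp (Q.comp (W ^ (n - 1 - j)))‖
      ≤ 2 * M' ^ 3 * K * Real.exp ((2 * |ω'| + 1) * t) := by
    rw [norm_smul ((1:ℝ) / 2 ^ n)
        (∑ j ∈ Finset.range n, (P ^ j).comp (Q.comp (W ^ (n - 1 - j)))), Real.norm_eq_abs,
      abs_of_pos (by positivity : (0:ℝ) < 1 / 2 ^ n)]
    have step1 : (1 / 2 ^ n : ℝ) * ‖∑ j ∈ Finset.range n,
        (P ^ j).comp (Q.comp (W ^ (n - 1 - j)))‖ ≤ (1 / 2 ^ n : ℝ) * (n * C) :=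
      mul_le_mul_of_nonneg_left hsum (by positivity)
    refine step1.trans ?_
    have hCeq : (1 / 2 ^ n : ℝ) * (n * C) = 2 * M' ^ 3 * K * t * e1 ^ (n + 1) := by
      have hn1 : n - 1 + 1 = n := Nat.succ_pred_eq_of_pos hn
      have hp2 : (2:ℝ) ^ n = 2 ^ (n - 1) * 2 := by rw [← pow_succ, hn1]
      have hpe : e1 ^ (n + 1) = e1 ^ (n - 1) * e1 ^ 2 := by
        rw [← pow_add]; congr 1; omega
      have h2 : (0:ℝ) < 2 ^ (n - 1) := by positivity
      rw [hC, mul_pow, hp2, hpe, ← hnu]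
      field_simp
      ring
    rw [hCeq]
    have hfinal : t * e1 ^ (n + 1) ≤ Real.exp ((2 * |ω'| + 1) * t) := by
      have h1 : e1 ^ (n + 1) = Real.exp (((n:ℝ) + 1) * (|ω'| * u)) := by
        rw [he1_def, ← Real.exp_nat_mul]
        push_cast
        ring_nf
      have h2 : ((n:ℝ) + 1) * (|ω'| * u) ≤ 2 * |ω'| * t := by
        have hh : ((n:ℝ) + 1) * u = t + u := by rw [add_mul, one_mul, hnu]
        nlinarith [abs_nonneg ω']
      have h3 : e1 ^ (n + 1) ≤ Real.exp (2 * |ω'| * t) := by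
        rw [h1]; exact Real.exp_le_exp.mpr h2
      have h4 : t ≤ Real.exp t := (Real.add_one_le_exp t).trans' (by linarith)
      calc t * e1 ^ (n + 1) ≤ Real.exp t * Real.exp (2 * |ω'| * t) :=
            mul_le_mul h4 h3 (pow_nonneg he1pos.le _) (Real.exp_pos t).le
        _ = Real.exp ((2 * |ω'| + 1) * t) := by rw [← Real.exp_add]; ring_nf
    have hpos : (0:ℝ) ≤ 2 * M' ^ 3 * K := by positivity
    calc 2 * M' ^ 3 * K * t * e1 ^ (n + 1) = 2 * M' ^ 3 * K * (t * e1 ^ (n + 1)) := by ring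
      _ ≤ 2 * M' ^ 3 * K * Real.exp ((2 * |ω'| + 1) * t) :=
          mul_le_mul_of_nonneg_left hfinal hpos
  calc ‖(1 / 2 ^ n : ℝ) • P ^ n‖ +
        ‖(1 / 2 ^ n : ℝ) • ∑ j ∈ Finset.range n, (P ^ j).comp (Q.comp (W ^ (n - 1 - j)))‖ +
        ‖(1 / 2 ^ n : ℝ) • W ^ n‖
      ≤ M' * Real.exp ((2 * |ω'| + 1) * t) + 2 * M' ^ 3 * K * Real.exp ((2 * |ω'| + 1) * t) +
        M' * Real.exp ((2 * |ω'| + 1) * t) := by linarith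
    _ = (2 * M' + 2 * M' ^ 3 * K) * Real.exp ((2 * |ω'| + 1) * t) := by ring
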